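/- With J_F(U) = ‖(U−W)A‖² = 2‖A‖² − 2 Re Tr(AA†W†U), if U is a critical point of J_F of the form U = W D (Γ̂ΛΓ̂† ⊕ X̃₀) D† where D diagonalizes AA† = D Ω² D†, Λ = ⊕ᵢ (−I_{νᵢ} ⊕ I_{nᵢ−νᵢ}) over the κ distinct nonzero eigenvalues ω̃ᵢ² of AA† with multiplicities nᵢ, then the critical value is J_F(U) = 4 Σ_{i=1}^κ νᵢ ω̃ᵢ². -/

import Mathlib

/-!
For unitary `U` and `W`, `‖(U − W)A‖² = 2 Re Tr(AA†) − 2 Re Tr(W†U AA†)`. Conjugating by `D`, the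
cross term becomes `Tr(Γ̂ΛΓ̂† Ω²)`, and since `Γ̂` commutes with `Ω²` this is `Tr(ΛΩ²) = Σⱼ λⱼ ωⱼ²`;
the block `X̃₀` only meets the zero eigenvalues and does not contribute. Hence
`J_F(U) = 2 Σⱼ (1 − λⱼ) ωⱼ² = 4 Σ_{λⱼ = −1} ωⱼ²`, and grouping the `j` by eigenvalue gives
`4 Σᵢ νᵢ ω̃ᵢ²`.
-/

open Matrix Finset

/-- The landscape `J_F(U) = ‖(U − W)A‖²` (squared Frobenius norm). -/
noncomputable def JF {N : ℕ} (A W : Matrix (Fin N) (Fin N) ℂ)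
    (U : Matrix (Fin N) (Fin N) ℂ) : ℝ :=
  (Matrix.trace (((U - W) * A)ᴴ * ((U - W) * A))).re

namespace Matrix

variable {n α : Type*} [Fintype n] [DecidableEq n]

theorem trace_mul_diagonal [NonUnitalNonAssocSemiring α] (P : Matrix n n α) (d : n → α) :
    trace (P * diagonal d) = ∑ i, P i i * d i := by
  simp [trace, mul_diagonal]

variable [CommRing α] [StarRing α]

theorem trace_unitary_conj {Q : Matrix n n α} (hQ : Q ∈ unitaryGroup n α) (Y : Matrix n n α) :
    trace (Q * Y * Qᴴ) = trace Y := by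
  rw [trace_mul_comm, ← Matrix.mul_assoc, ← star_eq_conjTranspose, mem_unitaryGroup_iff'.mp hQ,
    one_mul]

theorem trace_unitary_conj_mul_unitary_conj {D : Matrix n n α} (hD : D ∈ unitaryGroup n α)
    (Y M : Matrix n n α) : trace (D * Y * Dᴴ * (D * M * Dᴴ)) = trace (Y * M) := by
  have hDD : Dᴴ * D = 1 := mem_unitaryGroup_iff'.mp hD
  rw [← trace_unitary_conj hD (Y * M)]
  simp only [Matrix.mul_assoc]
  rw [← Matrix.mul_assoc Dᴴ D, hDD, Matrix.one_mul]

theorem trace_unitary_conj_mul_of_commute {G M : Matrix n n α} (hG : G ∈ unitaryGroup n α)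
    (hGM : Commute G M) (P : Matrix n n α) : trace (G * P * Gᴴ * M) = trace (P * M) := by
  have hGG : Gᴴ * G = 1 := mem_unitaryGroup_iff'.mp hG
  calc trace (G * P * Gᴴ * M) = trace (G * (P * Gᴴ * M)) := by simp only [Matrix.mul_assoc]
    _ = trace (P * Gᴴ * M * G) := trace_mul_comm _ _
    _ = trace (P * (Gᴴ * G) * M) := by
      rw [Matrix.mul_assoc (P * Gᴴ) M G, ← hGM.eq]; simp only [Matrix.mul_assoc]
    _ = trace (P * M) := by rw [hGG, Matrix.mul_one]

end Matrix

theorem JF_eq_of_mem_unitaryGroup {N : ℕ} {A W U : Matrix (Fin N) (Fin N) ℂ}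
    (hW : W ∈ unitaryGroup (Fin N) ℂ) (hU : U ∈ unitaryGroup (Fin N) ℂ) :
    JF A W U = 2 * (trace (A * Aᴴ)).re - 2 * (trace (Wᴴ * U * (A * Aᴴ))).re := by
  have hWW : Wᴴ * W = 1 := mem_unitaryGroup_iff'.mp hW
  have hUU : Uᴴ * U = 1 := mem_unitaryGroup_iff'.mp hU
  have hgram : (U - W)ᴴ * (U - W) = 2 - Uᴴ * W - Wᴴ * U := by
    rw [conjTranspose_sub, sub_mul, mul_sub, mul_sub, hUU, hWW, one_add_one_eq_two.symm]
    abel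
  have hadj : trace (Uᴴ * W * (A * Aᴴ)) = star (trace (Wᴴ * U * (A * Aᴴ))) := by
    rw [← trace_conjTranspose, trace_mul_comm]
    simp only [conjTranspose_mul, conjTranspose_conjTranspose, Matrix.mul_assoc]
  have hcyc : trace (((U - W) * A)ᴴ * ((U - W) * A)) = trace ((U - W)ᴴ * (U - W) * (A * Aᴴ)) := by
    rw [conjTranspose_mul, Matrix.mul_assoc, trace_mul_comm]
    simp only [Matrix.mul_assoc]
  rw [JF, hcyc, hgram, sub_mul, sub_mul, trace_sub, trace_sub, hadj, two_mul, trace_add]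
  simp only [Complex.sub_re, Complex.add_re, Complex.star_def, Complex.conj_re]
  ring

theorem Finset.sum_eq_sum_card_fiber_nsmul {ι κ M : Type*} [Fintype κ] [AddCommMonoid M]
    [DecidableEq M] (s : Finset ι) {x : ι → M} {c : κ → M} (hc : Function.Injective c)
    (hx : ∀ j ∈ s, x j = 0 ∨ ∃ k, x j = c k) :
    ∑ j ∈ s, x j = ∑ k, #{j ∈ s | x j = c k} • c k := by
  have hsplit : ∀ j ∈ s, x j = ∑ k, if x j = c k then c k else 0 := by
    intro j hj
    rcases hx j hj with h0 | ⟨k₀, hk₀⟩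
    · rw [h0]
      exact (Finset.sum_eq_zero fun k _ => ite_eq_right_iff.mpr fun h => h.symm).symm
    · rw [Finset.sum_eq_single k₀ (fun k _ hk => if_neg fun h => hk (hc (h.symm.trans hk₀)))
        (by simp), if_pos hk₀, ← hk₀]
  rw [Finset.sum_congr rfl hsplit, Finset.sum_comm]
  refine Finset.sum_congr rfl fun k _ => ?_
  rw [← Finset.sum_filter, Finset.sum_const]

theorem Finset.sum_sub_sum_mul_of_sign {ι : Type*} (s : Finset ι) (x lam : ι → ℝ)
    (hlam : ∀ j ∈ s, x j ≠ 0 → lam j = 1 ∨ lam j = -1) :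
    ∑ j ∈ s, x j - ∑ j ∈ s, lam j * x j = 2 * ∑ j ∈ s with lam j = -1, x j := by
  rw [← Finset.sum_sub_distrib, Finset.sum_filter, Finset.mul_sum]
  refine Finset.sum_congr rfl fun j hj => ?_
  by_cases hx : x j = 0
  · simp [hx]
  · rcases hlam j hj hx with h | h
    · norm_num [h]
    · rw [if_pos h, h]
      ring

theorem stmt7_general (N κ : ℕ) (A W D : Matrix (Fin N) (Fin N) ℂ)
    (hW : W ∈ Matrix.unitaryGroup (Fin N) ℂ)
    (hD : D ∈ Matrix.unitaryGroup (Fin N) ℂ)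
    -- ω2 is the diagonal of Ω², i.e. AA† = D Ω² D†
    (ω2 : Fin N → ℝ)
    (hAA : A * Aᴴ = D * Matrix.diagonal (fun j => (ω2 j : ℂ)) * Dᴴ)
    -- the distinct nonzero eigenvalues ωt₁² > ⋯ > ωt_κ² > 0 of AA†
    (ωt : Fin κ → ℝ) (hωtanti : StrictAnti ωt)
    (hvals : ∀ j, ω2 j = 0 ∨ ∃ k, ω2 j = ωt k)
    -- multiplicities n k and counts ν k of −1's in each block
    (ν : Fin κ → ℕ)
    (lam : Fin N → ℝ) (hlam : ∀ j, ω2 j ≠ 0 → lam j = 1 ∨ lam j = -1)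
    (hν : ∀ k, ν k = (Finset.univ.filter fun j => ω2 j = ωt k ∧ lam j = -1).card)
    -- G = Γ̂ ⊕ I with Γ̂ ∈ U(n₁) ⊕ ⋯ ⊕ U(n_κ): a unitary commuting with Ω²,
    -- equal to the identity on the zero-eigenvalue block
    (G : Matrix (Fin N) (Fin N) ℂ) (hG : G ∈ Matrix.unitaryGroup (Fin N) ℂ)
    (hGcomm : G * Matrix.diagonal (fun j => (ω2 j : ℂ)) =
      Matrix.diagonal (fun j => (ω2 j : ℂ)) * G)
    -- P = Λ ⊕ X̃₀ with Λ = ⊕ᵢ(−I_{νᵢ} ⊕ I_{nᵢ−νᵢ}) and X̃₀ ∈ U(n₀) arbitrary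
    (P : Matrix (Fin N) (Fin N) ℂ) (hP : P ∈ Matrix.unitaryGroup (Fin N) ℂ)
    (hPdiag : ∀ i j, ω2 i ≠ 0 ∨ ω2 j ≠ 0 → P i j = if i = j then (lam i : ℂ) else 0)
    -- the critical point U = W D (Γ̂ΛΓ̂† ⊕ X̃₀) D†
    (U : Matrix (Fin N) (Fin N) ℂ) (hU : U = W * D * (G * P * Gᴴ) * Dᴴ) :
    JF A W U = 4 * ∑ k, (ν k : ℝ) * ωt k := by
  have hUu : U ∈ unitaryGroup (Fin N) ℂ := hU ▸ mul_mem (mul_mem (mul_mem hW hD)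
    (mul_mem (mul_mem hG hP) (Unitary.star_mem hG))) (Unitary.star_mem hD)
  have hWU : Wᴴ * U = D * (G * P * Gᴴ) * Dᴴ := by
    rw [hU, Matrix.mul_assoc W, Matrix.mul_assoc W, ← Matrix.mul_assoc Wᴴ,
      show Wᴴ * W = 1 from mem_unitaryGroup_iff'.mp hW, Matrix.one_mul, Matrix.mul_assoc]
  have hcross : trace (Wᴴ * U * (A * Aᴴ)) = ((∑ j, lam j * ω2 j : ℝ) : ℂ) := by
    rw [hWU, hAA, trace_unitary_conj_mul_unitary_conj hD,
      trace_unitary_conj_mul_of_commute hG hGcomm, trace_mul_diagonal]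
    push_cast
    refine sum_congr rfl fun j _ => ?_
    by_cases hj : ω2 j = 0
    · simp [hj]
    · simp [hPdiag j j (Or.inl hj)]
  have htr : trace (A * Aᴴ) = ((∑ j, ω2 j : ℝ) : ℂ) := by
    rw [hAA, trace_unitary_conj hD, trace_diagonal, Complex.ofReal_sum]
  have hcount : ∑ j with lam j = -1, ω2 j = ∑ k, (ν k : ℝ) * ωt k := by
    rw [sum_eq_sum_card_fiber_nsmul _ hωtanti.injective fun j _ => hvals j]
    simp only [filter_filter, and_comm, hν, nsmul_eq_mul]
  rw [JF_eq_of_mem_unitaryGroup hW hUu, htr, hcross, Complex.ofReal_re, Complex.ofReal_re,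
    ← mul_sub, sum_sub_sum_mul_of_sign _ _ _ fun j _ => hlam j, hcount]
  ring

theorem stmt7 (N κ : ℕ) (A W D : Matrix (Fin N) (Fin N) ℂ)
    (hW : W ∈ Matrix.unitaryGroup (Fin N) ℂ)
    (hD : D ∈ Matrix.unitaryGroup (Fin N) ℂ)
    -- ω2 is the diagonal of Ω², i.e. AA† = D Ω² D†
    (ω2 : Fin N → ℝ)
    (hAA : A * Aᴴ = D * Matrix.diagonal (fun j => (ω2 j : ℂ)) * Dᴴ)
    -- the distinct nonzero eigenvalues ωt₁² > ⋯ > ωt_κ² > 0 of AA†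
    (ωt : Fin κ → ℝ) (hωtpos : ∀ k, 0 < ωt k) (hωtanti : StrictAnti ωt)
    (hvals : ∀ j, ω2 j = 0 ∨ ∃ k, ω2 j = ωt k)
    -- multiplicities n k and counts ν k of −1's in each block
    (n ν : Fin κ → ℕ)
    (hn : ∀ k, n k = (Finset.univ.filter fun j => ω2 j = ωt k).card)
    (lam : Fin N → ℝ) (hlam : ∀ j, ω2 j ≠ 0 → lam j = 1 ∨ lam j = -1)
    (hν : ∀ k, ν k = (Finset.univ.filter fun j => ω2 j = ωt k ∧ lam j = -1).card)
    -- G = Γ̂ ⊕ I with Γ̂ ∈ U(n₁) ⊕ ⋯ ⊕ U(n_κ): a unitary commuting with Ω²,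
    -- equal to the identity on the zero-eigenvalue block
    (G : Matrix (Fin N) (Fin N) ℂ) (hG : G ∈ Matrix.unitaryGroup (Fin N) ℂ)
    (hGcomm : G * Matrix.diagonal (fun j => (ω2 j : ℂ)) =
      Matrix.diagonal (fun j => (ω2 j : ℂ)) * G)
    (hGzero : ∀ i j, ω2 i = 0 ∨ ω2 j = 0 → G i j = if i = j then 1 else 0)
    -- P = Λ ⊕ X̃₀ with Λ = ⊕ᵢ(−I_{νᵢ} ⊕ I_{nᵢ−νᵢ}) and X̃₀ ∈ U(n₀) arbitrary
    (P : Matrix (Fin N) (Fin N) ℂ) (hP : P ∈ Matrix.unitaryGroup (Fin N) ℂ)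
    (hPdiag : ∀ i j, ω2 i ≠ 0 ∨ ω2 j ≠ 0 → P i j = if i = j then (lam i : ℂ) else 0)
    -- the critical point U = W D (Γ̂ΛΓ̂† ⊕ X̃₀) D†
    (U : Matrix (Fin N) (Fin N) ℂ) (hU : U = W * D * (G * P * Gᴴ) * Dᴴ) :
    JF A W U = 4 * ∑ k, (ν k : ℝ) * ωt k :=
  stmt7_general N κ A W D hW hD ω2 hAA ωt hωtanti hvals ν lam hlam hν G hG hGcomm P hP hPdiag U hU
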